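/- With the additional adjoint boundary conditions σ(x₀,t) = −(Aᵀ)^{-1}(x₀,t)ℰ(x₀,t) and σ(x_L,t) = (Aᵀ)^{-1}(x_L,t)ℰ(x_L,t), where Aᵀ(x₀,t) and Aᵀ(x_L,t) are invertible, the boundary term equals ∫₀^T Ũᵀℰ(x_L,t) dt + ∫₀^T Ũᵀℰ(x₀,t) dt; hence ∫₀^T∫_{x₀}^{x_L} σᵀ G dx dt = ∫₀^T (Ũᵀℰ)(x₀,t) + (Ũᵀℰ)(x_L,t) dt. -/

import Mathlib

/-!
With `f = σ ⬝ᵥ Ũ` and `g = σ ⬝ᵥ A Ũ`, the state equation and the adjoint equation combine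
(Lagrange identity) into `∂ₜ f + ∂ₓ g = σ ⬝ᵥ G`. The divergence theorem on `[0, T] × [x₀, x_L]`
turns the double integral into boundary terms: `f` vanishes at `t = 0` (`Ũ = 0`) and at `t = T`
(`σ = 0`), while the boundary conditions on `σ` make `g(t, x_L) - g(t, x₀) = Ũ ⬝ᵥ ℰ` at both ends.
-/

open Matrix intervalIntegral MeasureTheory Function Set

section Calculus

variable {E F : Type*} [NormedAddCommGroup E] [NormedSpace ℝ E]
  [NormedAddCommGroup F] [NormedSpace ℝ F] {ι : Type*} [Fintype ι]

theorem ContDiff.dotProduct {k : WithTop ℕ∞} {u v : E → ι → ℝ}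
    (hu : ContDiff ℝ k u) (hv : ContDiff ℝ k v) : ContDiff ℝ k fun p => u p ⬝ᵥ v p :=
  ContDiff.sum fun i _ => (contDiff_pi.1 hu i).mul (contDiff_pi.1 hv i)

theorem ContDiff.mulVec_of_entries {k : WithTop ℕ∞} {A : E → Matrix ι ι ℝ} {u : E → ι → ℝ}
    (hA : ∀ i j, ContDiff ℝ k fun p => A p i j) (hu : ContDiff ℝ k u) :
    ContDiff ℝ k fun p => A p *ᵥ u p :=
  contDiff_pi.2 fun i => (contDiff_pi.2 (hA i)).dotProduct hu

theorem HasDerivAt.dotProduct {u v : ℝ → ι → ℝ} {u' v' : ι → ℝ} {t : ℝ}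
    (hu : HasDerivAt u u' t) (hv : HasDerivAt v v' t) :
    HasDerivAt (fun s => u s ⬝ᵥ v s) (u' ⬝ᵥ v t + u t ⬝ᵥ v') t := by
  simp only [_root_.dotProduct, ← Finset.sum_add_distrib]
  exact HasDerivAt.fun_sum fun i _ => (hasDerivAt_pi.1 hu i).mul (hasDerivAt_pi.1 hv i)

theorem Differentiable.uncurry_left {φ : ℝ → ℝ → F} (x : ℝ)
    (h : Differentiable ℝ (uncurry φ)) : Differentiable ℝ (φ x) :=
  h.comp ((differentiable_const x).prodMk differentiable_id)

theorem Differentiable.uncurry_right {φ : ℝ → ℝ → F} (y : ℝ)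
    (h : Differentiable ℝ (uncurry φ)) : Differentiable ℝ fun x => φ x y :=
  h.comp (differentiable_id.prodMk (differentiable_const y))

theorem DifferentiableAt.fderiv_apply_one_zero {Φ : ℝ × ℝ → F} {a b : ℝ}
    (h : DifferentiableAt ℝ Φ (a, b)) : fderiv ℝ Φ (a, b) (1, 0) = deriv (fun s => Φ (s, b)) a :=
  (h.hasFDerivAt.comp_hasDerivAt a ((hasDerivAt_id a).prodMk (hasDerivAt_const a b))).deriv.symm

theorem DifferentiableAt.fderiv_apply_zero_one {Φ : ℝ × ℝ → F} {a b : ℝ}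
    (h : DifferentiableAt ℝ Φ (a, b)) : fderiv ℝ Φ (a, b) (0, 1) = deriv (fun s => Φ (a, s)) b :=
  (h.hasFDerivAt.comp_hasDerivAt b ((hasDerivAt_const b a).prodMk (hasDerivAt_id b))).deriv.symm

theorem integral_integral_deriv_add_deriv [CompleteSpace F] (f g : ℝ → ℝ → F)
    (hf : ContDiff ℝ 1 (uncurry f)) (hg : ContDiff ℝ 1 (uncurry g)) (a b c d : ℝ) :
    (∫ t in a..b, ∫ x in c..d, deriv (fun s => f s x) t + deriv (fun y => g t y) x) =
      (((∫ t in a..b, g t d) - ∫ t in a..b, g t c) + ∫ x in c..d, f b x) -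
        ∫ x in c..d, f a x := by
  have hf' : ∀ t x, deriv (fun s => f s x) t = fderiv ℝ (uncurry f) (t, x) (1, 0) :=
    fun t x => ((hf.differentiable one_ne_zero) (t, x)).fderiv_apply_one_zero.symm
  have hg' : ∀ t x, deriv (fun y => g t y) x = fderiv ℝ (uncurry g) (t, x) (0, 1) :=
    fun t x => ((hg.differentiable one_ne_zero) (t, x)).fderiv_apply_zero_one.symm
  simp only [hf', hg']
  refine integral2_divergence_prod_of_hasFDerivAt _ _ _ _ a c b d hf.continuous.continuousOn
    hg.continuous.continuousOn (fun p _ => (hf.differentiable one_ne_zero p).hasFDerivAt)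
    (fun p _ => (hg.differentiable one_ne_zero p).hasFDerivAt) ?_
  have hcont : Continuous fun p => fderiv ℝ (uncurry f) p (1, 0) + fderiv ℝ (uncurry g) p (0, 1) :=
    ((hf.continuous_fderiv one_ne_zero).clm_apply continuous_const).add
      ((hg.continuous_fderiv one_ne_zero).clm_apply continuous_const)
  exact hcont.continuousOn.integrableOn_compact (isCompact_uIcc.prod isCompact_uIcc)

theorem deriv_dotProduct_add_deriv_dotProduct_mulVec {σ u : ℝ → ℝ → ι → ℝ}
    {A : ℝ → ℝ → Matrix ι ι ℝ} (hσ : Differentiable ℝ (uncurry σ))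
    (hu : Differentiable ℝ (uncurry u))
    (hAu : Differentiable ℝ fun p : ℝ × ℝ => A p.1 p.2 *ᵥ u p.1 p.2)
    (B : Matrix ι ι ℝ) (x t : ℝ) :
    deriv (fun s => σ x s ⬝ᵥ u x s) t + deriv (fun y => σ y t ⬝ᵥ A y t *ᵥ u y t) x =
      σ x t ⬝ᵥ (deriv (fun s => u x s) t + deriv (fun y => A y t *ᵥ u y t) x - B *ᵥ u x t)
        + (deriv (fun s => σ x s) t + (A x t)ᵀ *ᵥ deriv (fun y => σ y t) x + Bᵀ *ᵥ σ x t)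
          ⬝ᵥ u x t := by
  rw [(((hσ.uncurry_left x) t).hasDerivAt.dotProduct ((hu.uncurry_left x) t).hasDerivAt).deriv,
    (((hσ.uncurry_right t) x).hasDerivAt.dotProduct
      ((hAu.uncurry_right (φ := fun y t => A y t *ᵥ u y t) t) x).hasDerivAt).deriv]
  simp only [dotProduct_add, dotProduct_sub, add_dotProduct, mulVec_transpose, dotProduct_mulVec]
  ring

end Calculus

theorem inv_transpose_mulVec_dotProduct_mulVec {ι R : Type*} [Fintype ι] [DecidableEq ι]
    [CommRing R] {M : Matrix ι ι R} (hM : IsUnit Mᵀ) (e u : ι → R) :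
    (Mᵀ)⁻¹ *ᵥ e ⬝ᵥ M *ᵥ u = u ⬝ᵥ e := by
  rw [dotProduct_mulVec, ← mulVec_transpose, mulVec_mulVec,
    mul_nonsing_inv _ ((isUnit_iff_isUnit_det _).mp hM), one_mulVec, dotProduct_comm]

theorem adjoint_boundary_error_pairing_general (m : ℕ) (x₀ xL T : ℝ) (hx : x₀ < xL) (hT : 0 < T)
    (σ Ut G : ℝ → ℝ → (Fin m → ℝ))
    (E₀ EL : ℝ → (Fin m → ℝ))
    (A S C : ℝ → ℝ → Matrix (Fin m) (Fin m) ℝ)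
    (hσ : ContDiff ℝ 1 (fun p : ℝ × ℝ => σ p.1 p.2))
    (hUt : ContDiff ℝ 1 (fun p : ℝ × ℝ => Ut p.1 p.2))
    (hA : ∀ i j, ContDiff ℝ 1 (fun p : ℝ × ℝ => A p.1 p.2 i j))
    (hlin : ∀ x ∈ Set.Icc x₀ xL, ∀ t ∈ Set.Icc (0 : ℝ) T,
      deriv (fun s => Ut x s) t + deriv (fun y => (A y t).mulVec (Ut y t)) x
        - (S x t + C x t).mulVec (Ut x t) = G x t)
    (hinit : ∀ x ∈ Set.Icc x₀ xL, Ut x 0 = 0)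
    (hadj : ∀ x ∈ Set.Icc x₀ xL, ∀ t ∈ Set.Icc (0 : ℝ) T,
      deriv (fun s => σ x s) t + (A x t)ᵀ.mulVec (deriv (fun y => σ y t) x)
        + ((S x t)ᵀ + (C x t)ᵀ).mulVec (σ x t) = 0)
    (hfinal : ∀ x ∈ Set.Icc x₀ xL, σ x T = 0)
    (hinv₀ : ∀ t ∈ Set.Icc (0 : ℝ) T, IsUnit ((A x₀ t)ᵀ))
    (hinvL : ∀ t ∈ Set.Icc (0 : ℝ) T, IsUnit ((A xL t)ᵀ))
    (hbc₀ : ∀ t ∈ Set.Icc (0 : ℝ) T, σ x₀ t = -(((A x₀ t)ᵀ)⁻¹.mulVec (E₀ t)))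
    (hbcL : ∀ t ∈ Set.Icc (0 : ℝ) T, σ xL t = ((A xL t)ᵀ)⁻¹.mulVec (EL t)) :
    (∫ t in (0 : ℝ)..T, ∫ x in x₀..xL, σ x t ⬝ᵥ G x t)
      = ∫ t in (0 : ℝ)..T, (Ut x₀ t ⬝ᵥ E₀ t + Ut xL t ⬝ᵥ EL t) := by
  have hAu : ContDiff ℝ 1 fun p : ℝ × ℝ => A p.1 p.2 *ᵥ Ut p.1 p.2 := .mulVec_of_entries hA hUt
  set f : ℝ → ℝ → ℝ := fun t x => σ x t ⬝ᵥ Ut x t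
  set g : ℝ → ℝ → ℝ := fun t x => σ x t ⬝ᵥ A x t *ᵥ Ut x t
  have hswap : ContDiff ℝ 1 (Prod.swap : ℝ × ℝ → ℝ × ℝ) := contDiff_snd.prodMk contDiff_fst
  have hf : ContDiff ℝ 1 (uncurry f) := (hσ.dotProduct hUt).comp hswap
  have hg : ContDiff ℝ 1 (uncurry g) := (hσ.dotProduct hAu).comp hswap
  have hf_T : ∫ x in x₀..xL, f T x = 0 := (integral_congr fun x hx' => by
    simp [f, hfinal x (uIcc_of_le hx.le ▸ hx')]).trans integral_zero
  have hf_0 : ∫ x in x₀..xL, f 0 x = 0 := (integral_congr fun x hx' => by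
    simp [f, hinit x (uIcc_of_le hx.le ▸ hx')]).trans integral_zero
  have hg_int : ∀ x, IntervalIntegrable (fun t => g t x) volume 0 T := fun x =>
    (hg.continuous.uncurry_right x).intervalIntegrable _ _
  calc (∫ t in (0 : ℝ)..T, ∫ x in x₀..xL, σ x t ⬝ᵥ G x t)
      = ∫ t in (0 : ℝ)..T, ∫ x in x₀..xL, deriv (fun s => f s x) t + deriv (fun y => g t y) x := by
        refine integral_congr fun t ht => integral_congr fun x hx' => ?_
        rw [uIcc_of_le hT.le] at ht
        rw [uIcc_of_le hx.le] at hx'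
        have := deriv_dotProduct_add_deriv_dotProduct_mulVec (hσ.differentiable one_ne_zero)
          (hUt.differentiable one_ne_zero) (hAu.differentiable one_ne_zero) (S x t + C x t) x t
        rw [hlin x hx' t ht, transpose_add, hadj x hx' t ht, zero_dotProduct, add_zero] at this
        exact this.symm
    _ = (((∫ t in (0 : ℝ)..T, g t xL) - ∫ t in (0 : ℝ)..T, g t x₀) + ∫ x in x₀..xL, f T x) -
          ∫ x in x₀..xL, f 0 x := integral_integral_deriv_add_deriv f g hf hg 0 T x₀ xL
    _ = ∫ t in (0 : ℝ)..T, (g t xL - g t x₀) := by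
        rw [integral_sub (hg_int xL) (hg_int x₀), hf_T, hf_0, add_zero, sub_zero]
    _ = _ := integral_congr fun t ht => by
        rw [uIcc_of_le hT.le] at ht
        simp only [g, hbc₀ t ht, hbcL t ht, neg_dotProduct,
          inv_transpose_mulVec_dotProduct_mulVec (hinv₀ t ht),
          inv_transpose_mulVec_dotProduct_mulVec (hinvL t ht)]
        ring

/-- With the adjoint boundary conditions `σ(x₀,t) = −(Aᵀ)⁻¹(x₀,t)ℰ(x₀,t)` and
`σ(x_L,t) = (Aᵀ)⁻¹(x_L,t)ℰ(x_L,t)` (with `Aᵀ` invertible at the boundary), the boundary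
pairing becomes `∫₀^T∫ σᵀ G dx dt = ∫₀^T (Ũᵀℰ)(x₀,t) + (Ũᵀℰ)(x_L,t) dt`. -/
theorem adjoint_boundary_error_pairing (m : ℕ) (x₀ xL T : ℝ) (hx : x₀ < xL) (hT : 0 < T)
    (σ Ut G : ℝ → ℝ → (Fin m → ℝ))
    (E₀ EL : ℝ → (Fin m → ℝ))
    (A S C : ℝ → ℝ → Matrix (Fin m) (Fin m) ℝ)
    (hσ : ContDiff ℝ 1 (fun p : ℝ × ℝ => σ p.1 p.2))
    (hUt : ContDiff ℝ 1 (fun p : ℝ × ℝ => Ut p.1 p.2))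
    (hG : Continuous (fun p : ℝ × ℝ => G p.1 p.2))
    (hA : ∀ i j, ContDiff ℝ 1 (fun p : ℝ × ℝ => A p.1 p.2 i j))
    (hS : ∀ i j, ContDiff ℝ 1 (fun p : ℝ × ℝ => S p.1 p.2 i j))
    (hC : ∀ i j, ContDiff ℝ 1 (fun p : ℝ × ℝ => C p.1 p.2 i j))
    (hlin : ∀ x ∈ Set.Icc x₀ xL, ∀ t ∈ Set.Icc (0 : ℝ) T,
      deriv (fun s => Ut x s) t + deriv (fun y => (A y t).mulVec (Ut y t)) x
        - (S x t + C x t).mulVec (Ut x t) = G x t)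
    (hinit : ∀ x ∈ Set.Icc x₀ xL, Ut x 0 = 0)
    (hadj : ∀ x ∈ Set.Icc x₀ xL, ∀ t ∈ Set.Icc (0 : ℝ) T,
      deriv (fun s => σ x s) t + (A x t)ᵀ.mulVec (deriv (fun y => σ y t) x)
        + ((S x t)ᵀ + (C x t)ᵀ).mulVec (σ x t) = 0)
    (hfinal : ∀ x ∈ Set.Icc x₀ xL, σ x T = 0)
    (hinv₀ : ∀ t ∈ Set.Icc (0 : ℝ) T, IsUnit ((A x₀ t)ᵀ))
    (hinvL : ∀ t ∈ Set.Icc (0 : ℝ) T, IsUnit ((A xL t)ᵀ))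
    (hbc₀ : ∀ t ∈ Set.Icc (0 : ℝ) T, σ x₀ t = -(((A x₀ t)ᵀ)⁻¹.mulVec (E₀ t)))
    (hbcL : ∀ t ∈ Set.Icc (0 : ℝ) T, σ xL t = ((A xL t)ᵀ)⁻¹.mulVec (EL t)) :
    (∫ t in (0 : ℝ)..T, ∫ x in x₀..xL, σ x t ⬝ᵥ G x t)
      = ∫ t in (0 : ℝ)..T, (Ut x₀ t ⬝ᵥ E₀ t + Ut xL t ⬝ᵥ EL t) :=
  adjoint_boundary_error_pairing_general m x₀ xL T hx hT σ Ut G E₀ EL A S C hσ hUt hA hlin hinit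
    hadj hfinal hinv₀ hinvL hbc₀ hbcL
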